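/- Let Y be a topological space and L ⊆ Y a compact subset. Then the closure of L is contained in L ∪ V(Y), where V(Y) is the set of branch points of Y (points y for which there exists z ≠ y such that every neighborhood of z meets every neighborhood of y). -/

import Mathlib

/-- The set of branch points of `Y`: points `y` for which there exists `z ≠ y`
such that every open neighborhood of `z` meets every open neighborhood of `y`. -/
def BranchPoints (Y : Type*) [TopologicalSpace Y] : Set Y :=
  { y | ∃ z : Y, z ≠ y ∧
      ∀ U V : Set Y, IsOpen U → IsOpen V → y ∈ U → z ∈ V → (U ∩ V).Nonempty }

open Filter Topology

theorem mem_branchPoints_iff {Y : Type*} [TopologicalSpace Y] {y : Y} :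
    y ∈ BranchPoints Y ↔ ∃ z, z ≠ y ∧ ¬Disjoint (𝓝 y) (𝓝 z) := by
  refine exists_congr fun z => and_congr_right fun _ => ?_
  rw [(nhds_basis_opens y).disjoint_iff (nhds_basis_opens z)]
  push Not
  simp only [Set.not_disjoint_iff_nonempty_inter, and_imp]
  exact ⟨fun h U hyU hU V hzV hV => h U V hU hV hyU hzV,
    fun h U V hU hV hyU hzV => h U hyU hU V hzV hV⟩

theorem IsCompact.exists_not_disjoint_nhds_of_mem_closure {Y : Type*} [TopologicalSpace Y]
    {L : Set Y} (hL : IsCompact L) {y : Y} (hy : y ∈ closure L) :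
    ∃ z ∈ L, ¬Disjoint (𝓝 y) (𝓝 z) := by
  have : (𝓝 y ⊓ 𝓟 L).NeBot := mem_closure_iff_clusterPt.mp hy
  obtain ⟨z, hzL, hz⟩ := hL.exists_clusterPt (f := 𝓝 y ⊓ 𝓟 L) inf_le_right
  exact ⟨z, hzL, fun h => (hz.mono inf_le_left).neBot.ne (disjoint_iff.mp h.symm)⟩

/-- If `L ⊆ Y` is compact, then `closure L ⊆ L ∪ V(Y)`. -/
theorem closure_subset_union_branchPoints
    {Y : Type*} [TopologicalSpace Y] (L : Set Y) (hL : IsCompact L) :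
    closure L ⊆ L ∪ BranchPoints Y := by
  intro y hy
  by_cases hyL : y ∈ L
  · exact Or.inl hyL
  obtain ⟨z, hzL, hyz⟩ := hL.exists_not_disjoint_nhds_of_mem_closure hy
  exact Or.inr (mem_branchPoints_iff.mpr ⟨z, fun hzy => hyL (hzy ▸ hzL), hyz⟩)
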